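/- For every real c > 0, the sequence of functions x ↦ (1/n) · F_n''(x) converges to 0 uniformly on the half-line (−∞, −c] as n → ∞, where F_n'' is the second derivative of F_n(x) = log(∑_{j=0}^n e^{jx}). -/

import Mathlib

/-!
`F_n''(x)` is the variance of `j` under the probability weights on `{0, …, n}` proportional to
`e^{jx}`, so `0 ≤ F_n''(x) ≤ ∑ j² e^{jx} / ∑ e^{jx} ≤ ∑_{j ≥ 0} j² e^{-cj} < ∞` for `x ≤ -c`.
A bound uniform in `n` and `x`, divided by `n`, tends to `0`.
-/

open Filter Finset Real Topology

section ExpMoment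

variable {ι : Type*} (s : Finset ι) (a : ι → ℝ)

/-- Divided by `expMoment s a 0 x`, this is the `k`-th moment of `a` under the probability
weights proportional to `exp (a i * x)`. -/
noncomputable def expMoment (k : ℕ) (x : ℝ) : ℝ := ∑ i ∈ s, a i ^ k * exp (a i * x)

lemma expMoment_zero_eq (x : ℝ) : expMoment s a 0 x = ∑ i ∈ s, exp (a i * x) := by
  simp only [expMoment, pow_zero, one_mul]

lemma hasDerivAt_expMoment (k : ℕ) (x : ℝ) :
    HasDerivAt (expMoment s a k) (expMoment s a (k + 1) x) x :=
  HasDerivAt.fun_sum fun i _ =>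
    (((hasDerivAt_id' x).const_mul (a i)).exp.const_mul (a i ^ k)).congr_deriv (by ring)

lemma expMoment_zero_pos (hs : s.Nonempty) (x : ℝ) : 0 < expMoment s a 0 x := by
  rw [expMoment_zero_eq]
  exact sum_pos (fun i _ => exp_pos _) hs

lemma one_le_expMoment_zero {i : ι} (hi : i ∈ s) (hai : a i = 0) (x : ℝ) :
    1 ≤ expMoment s a 0 x := by
  rw [expMoment_zero_eq]
  calc (1 : ℝ) = exp (a i * x) := by simp [hai]
    _ ≤ ∑ j ∈ s, exp (a j * x) :=
      single_le_sum (f := fun j => exp (a j * x)) (fun j _ => (exp_pos _).le) hi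

lemma expMoment_two_nonneg (x : ℝ) : 0 ≤ expMoment s a 2 x :=
  sum_nonneg fun i _ => by positivity

lemma expMoment_one_sq_le (x : ℝ) :
    expMoment s a 1 x ^ 2 ≤ expMoment s a 2 x * expMoment s a 0 x :=
  sum_sq_le_sum_mul_sum_of_sq_le_mul s (fun i _ => by positivity) (fun i _ => by positivity)
    fun i _ => le_of_eq (by ring)

lemma deriv_log_sum_exp (hs : s.Nonempty) :
    deriv (fun y => log (∑ i ∈ s, exp (a i * y))) =
      fun x => expMoment s a 1 x / expMoment s a 0 x := by
  funext x
  simp only [← expMoment_zero_eq]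
  exact ((hasDerivAt_expMoment s a 0 x).log (expMoment_zero_pos s a hs x).ne').deriv

lemma deriv_deriv_log_sum_exp (hs : s.Nonempty) (x : ℝ) :
    deriv (deriv fun y => log (∑ i ∈ s, exp (a i * y))) x =
      (expMoment s a 2 x * expMoment s a 0 x - expMoment s a 1 x ^ 2) / expMoment s a 0 x ^ 2 := by
  rw [deriv_log_sum_exp s a hs, ((hasDerivAt_expMoment s a 1 x).fun_div
    (hasDerivAt_expMoment s a 0 x) (expMoment_zero_pos s a hs x).ne').deriv]
  ring

lemma abs_deriv_deriv_log_sum_exp_le (hs : s.Nonempty) (x : ℝ) :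
    |deriv (deriv fun y => log (∑ i ∈ s, exp (a i * y))) x| ≤
      expMoment s a 2 x / expMoment s a 0 x := by
  have hS := expMoment_zero_pos s a hs x
  have hvar := expMoment_one_sq_le s a x
  rw [deriv_deriv_log_sum_exp s a hs, abs_of_nonneg (div_nonneg (by linarith) (by positivity))]
  calc (expMoment s a 2 x * expMoment s a 0 x - expMoment s a 1 x ^ 2) / expMoment s a 0 x ^ 2
      ≤ expMoment s a 2 x * expMoment s a 0 x / expMoment s a 0 x ^ 2 := by
        gcongr
        linarith [sq_nonneg (expMoment s a 1 x)]
    _ = expMoment s a 2 x / expMoment s a 0 x := by field_simp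

end ExpMoment

lemma expMoment_natCast_two_le_tsum (s : Finset ℕ) {c x : ℝ} (hc : 0 < c) (hx : x ≤ -c) :
    expMoment s Nat.cast 2 x ≤ ∑' j : ℕ, (j : ℝ) ^ 2 * exp (-c) ^ j := by
  have hsum : Summable fun j : ℕ => (j : ℝ) ^ 2 * exp (-c) ^ j :=
    summable_pow_mul_geometric_of_norm_lt_one 2 (by
      rw [norm_of_nonneg (exp_pos _).le]
      exact exp_lt_one_iff.2 (neg_lt_zero.2 hc))
  refine le_trans (sum_le_sum fun j _ => ?_) (hsum.sum_le_tsum s fun j _ => by positivity)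
  rw [← exp_nat_mul]
  gcongr

lemma tendstoUniformlyOn_mul_of_tendsto_zero_of_abs_le {α β : Type*} {l : Filter α} {u : α → ℝ}
    {f : α → β → ℝ} {s : Set β} {M : ℝ} (hu : Tendsto u l (𝓝 0))
    (hf : ∀ i, ∀ x ∈ s, |f i x| ≤ M) :
    TendstoUniformlyOn (fun i x => u i * f i x) (fun _ => 0) l s := by
  rw [Metric.tendstoUniformlyOn_iff]
  intro ε hε
  have hM : 0 < |M| + 1 := by positivity
  filter_upwards [Metric.tendsto_nhds.1 hu (ε / (|M| + 1)) (by positivity)] with i hi x hx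
  rw [dist_zero_left, norm_mul, norm_eq_abs, norm_eq_abs]
  rw [dist_zero_right, norm_eq_abs, lt_div_iff₀ hM] at hi
  calc |u i| * |f i x| ≤ |u i| * (|M| + 1) := by
        gcongr
        linarith [hf i x hx, le_abs_self M]
    _ < ε := hi

/-- For every real `c > 0`, the functions `x ↦ (1/n) · F_n''(x)` converge to `0` uniformly on
`(−∞, −c]` as `n → ∞`, where `F_n(x) = log (∑_{j=0}^n e^{jx})`. -/
theorem tendstoUniformlyOn_second_deriv_log_sum_exp_Iic (c : ℝ) (hc : 0 < c) :
    TendstoUniformlyOn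
      (fun (n : ℕ) (x : ℝ) =>
        (1 / (n : ℝ)) *
          deriv (deriv (fun y : ℝ =>
            Real.log (∑ j ∈ Finset.range (n + 1), Real.exp (j * y)))) x)
      (fun _ => 0) atTop (Set.Iic (-c)) := by
  have h0 (n : ℕ) : 0 ∈ range (n + 1) := mem_range.2 n.succ_pos
  refine tendstoUniformlyOn_mul_of_tendsto_zero_of_abs_le
    (M := ∑' j : ℕ, (j : ℝ) ^ 2 * exp (-c) ^ j) tendsto_one_div_atTop_nhds_zero_nat
    fun n x hx => ?_
  calc _ ≤ expMoment (range (n + 1)) Nat.cast 2 x / expMoment (range (n + 1)) Nat.cast 0 x :=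
        abs_deriv_deriv_log_sum_exp_le _ _ ⟨0, h0 n⟩ x
    _ ≤ expMoment (range (n + 1)) Nat.cast 2 x :=
        div_le_self (expMoment_two_nonneg _ _ x)
          (one_le_expMoment_zero _ _ (h0 n) Nat.cast_zero x)
    _ ≤ ∑' j : ℕ, (j : ℝ) ^ 2 * exp (-c) ^ j := expMoment_natCast_two_le_tsum _ hc hx
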